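/- If {v_i}_{i=1}^{d²} ⊆ ℂ^d is a set of d² unit vectors satisfying |⟨v_i, v_j⟩|² = 1/(d+1) for all i ≠ j, then for every X ∈ M_d(ℂ), (1/d)·Σ_{i=1}^{d²} (v_i v_i*) X (v_i v_i*) = (1/(d+1))·(X + tr(X)·I_d). -/

import Mathlib

/-!
Write `P_i = v_i v_i*`, `S = ∑ P_i ⊗ P_i` and `T = 1 + W`, where `W` is the flip `x ⊗ y ↦ y ⊗ x`
of `ℂ^d ⊗ ℂ^d`, and put `c = d / (d + 1)`. Since `tr (P_i P_j) = |⟨v_i, v_j⟩|²`, the trace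
computations `tr (S T) = 2 d² = c tr (T²)` and
`tr (S²) = ∑_{i,j} |⟨v_i, v_j⟩|⁴ = d² + d² (d² - 1) / (d + 1)² = c² tr (T²)`
give `tr ((S - c T)²) = 0`; as `S - c T` is Hermitian, `S = c (1 + W)`, i.e. the SIC is a
2-design. Contracting the entries of this identity against `X` gives
`∑ P_i X P_i = c (X + tr X • 1)`.
-/

open Matrix

/-- The rank-one matrix `x y*` with entries `(x y*)_{k,l} = x_k * conj (y_l)`. -/
noncomputable def outer {d : ℕ} (x y : Fin d → ℂ) : Matrix (Fin d) (Fin d) ℂ :=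
  fun k l => x k * (starRingEnd ℂ) (y l)

open scoped Kronecker ComplexOrder InnerProductSpace

namespace Matrix

abbrev swapMatrix (ι R : Type*) [DecidableEq ι] [Zero R] [One R] : Matrix (ι × ι) (ι × ι) R :=
  Equiv.Perm.permMatrix R (Equiv.prodComm ι ι)

variable {ι R : Type*} [DecidableEq ι]

lemma isHermitian_swapMatrix [NonAssocSemiring R] [StarRing R] :
    (swapMatrix ι R).IsHermitian := by
  rw [IsHermitian, conjTranspose_permMatrix]
  rfl

variable [Fintype ι]

lemma swapMatrix_mul_self [NonAssocSemiring R] : swapMatrix ι R * swapMatrix ι R = 1 := by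
  rw [← permMatrix_mul]
  exact permMatrix_one

lemma trace_swapMatrix [AddCommMonoidWithOne R] : (swapMatrix ι R).trace = Fintype.card ι := by
  rw [trace, Fintype.sum_prod_type]
  simp [Prod.ext_iff, ite_and]

lemma trace_kronecker_mul_swapMatrix [NonAssocSemiring R] (A B : Matrix ι ι R) :
    (A ⊗ₖ B * swapMatrix ι R).trace = (A * B).trace := by
  simp [trace, mul_apply, Fintype.sum_prod_type, Prod.ext_iff, ite_and]

lemma one_add_swapMatrix_mul_self [NonAssocSemiring R] :
    (1 + swapMatrix ι R) * (1 + swapMatrix ι R) = 2 • (1 + swapMatrix ι R) := by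
  rw [add_mul, mul_add, mul_add, swapMatrix_mul_self, Matrix.one_mul, Matrix.mul_one,
    Matrix.one_mul, two_nsmul]
  abel

lemma sum_mul_mul_eq_of_sum_kronecker_eq [CommRing R] {κ : Type*} [Fintype κ]
    (A B : κ → Matrix ι ι R) (c : R) (h : ∑ i, A i ⊗ₖ B i = c • (1 + swapMatrix ι R))
    (X : Matrix ι ι R) : ∑ i, A i * X * B i = c • (X + X.trace • 1) := by
  have hcoef : ∀ k l a b, ∑ i, A i k a * B i b l =
      c * ((if k = a ∧ b = l then 1 else 0) + if b = a ∧ k = l then 1 else 0) := by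
    intro k l a b
    simpa [sum_apply, one_apply, Prod.ext_iff] using congr_fun₂ h (k, b) (a, l)
  ext k l
  calc (∑ i, A i * X * B i) k l = ∑ b, ∑ a, X a b * ∑ i, A i k a * B i b l := by
        simp only [sum_apply, mul_apply, Finset.sum_mul, Finset.mul_sum]
        rw [Finset.sum_comm]
        refine Finset.sum_congr rfl fun b _ => ?_
        rw [Finset.sum_comm]
        exact Finset.sum_congr rfl fun a _ => Finset.sum_congr rfl fun i _ => by ring
    _ = (c • (X + X.trace • 1)) k l := by
        simp [hcoef, ite_and, one_apply, trace, mul_add, Finset.sum_add_distrib, Finset.mul_sum,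
          mul_comm]

end Matrix

section HermitianTrace

variable {n R : Type*} [Fintype n] [CommRing R] [PartialOrder R] [StarRing R] [StarOrderedRing R]
  [NoZeroDivisors R]

theorem Matrix.IsHermitian.eq_smul_of_trace_mul_eq {S T : Matrix n n R} (hS : S.IsHermitian)
    (hT : T.IsHermitian) {c : R} (hc : IsSelfAdjoint c)
    (hST : (S * T).trace = c * (T * T).trace) (hSS : (S * S).trace = c ^ 2 * (T * T).trace) :
    S = c • T := by
  have hM : (S - c • T).IsHermitian := hS.sub (hT.smul hc)
  rw [← sub_eq_zero, ← trace_conjTranspose_mul_self_eq_zero_iff, hM.eq]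
  simp only [sub_mul, mul_sub, Matrix.smul_mul, Matrix.mul_smul, trace_sub, trace_smul, smul_eq_mul,
    trace_mul_comm T S, hST, hSS]
  ring

end HermitianTrace

lemma Fintype.sum_ite_eq_sub_add {κ M : Type*} [Fintype κ] [DecidableEq κ] [AddCommGroup M]
    (i : κ) (a b : M) : ∑ j, (if i = j then a else b) = a - b + Fintype.card κ • b := by
  have h : ∀ j, (if i = j then a else b) = (if i = j then a - b else 0) + b := by
    intro j
    split_ifs <;> simp
  simp [h, Finset.sum_add_distrib]

section Outer

variable {d : ℕ}

lemma outer_eq_vecMulVec (x y : Fin d → ℂ) : outer x y = vecMulVec x (star y) := rfl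

lemma isHermitian_outer_self (x : Fin d → ℂ) : (outer x x).IsHermitian := by
  rw [IsHermitian, outer_eq_vecMulVec, conjTranspose_vecMulVec, star_star]

lemma trace_outer_self (x : EuclideanSpace ℂ (Fin d)) : (outer x x).trace = (‖x‖ : ℂ) ^ 2 := by
  rw [outer_eq_vecMulVec, trace_vecMulVec]
  exact inner_self_eq_norm_sq_to_K x

lemma trace_outer_self_mul_outer_self (x y : EuclideanSpace ℂ (Fin d)) :
    (outer x x * outer y y).trace = (‖⟪x, y⟫_ℂ‖ : ℂ) ^ 2 := by
  rw [outer_eq_vecMulVec, outer_eq_vecMulVec, vecMulVec_mul_vecMulVec, trace_vecMulVec,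
    dotProduct_smul, smul_eq_mul, dotProduct_comm, ← EuclideanSpace.inner_eq_star_dotProduct,
    ← EuclideanSpace.inner_eq_star_dotProduct, ← inner_conj_symm y x]
  exact RCLike.mul_conj (K := ℂ) _

end Outer

/-- Symmetric informationally complete (SIC) family. -/
structure IsSIC {κ : Type*} [Fintype κ] {d : ℕ} (v : κ → EuclideanSpace ℂ (Fin d)) : Prop where
  card_eq : Fintype.card κ = d ^ 2
  norm_eq_one : ∀ i, ‖v i‖ = 1
  norm_inner_sq_eq : ∀ i j, i ≠ j → ‖⟪v i, v j⟫_ℂ‖ ^ 2 = 1 / (d + 1)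

namespace IsSIC

variable {κ : Type*} [Fintype κ] [DecidableEq κ] {d : ℕ} {v : κ → EuclideanSpace ℂ (Fin d)}

lemma trace_outer_mul_outer (h : IsSIC v) (i j : κ) :
    (outer (v i) (v i) * outer (v j) (v j)).trace = if i = j then 1 else ((d : ℂ) + 1)⁻¹ := by
  rw [trace_outer_self_mul_outer_self]
  split_ifs with hij
  · rw [hij, inner_self_eq_norm_sq_to_K, h.norm_eq_one]
    simp
  · rw [← Complex.ofReal_pow, h.norm_inner_sq_eq i j hij]
    push_cast
    rw [one_div]

theorem sum_kronecker_outer (h : IsSIC v) :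
    ∑ i, outer (v i) (v i) ⊗ₖ outer (v i) (v i) =
      ((d : ℂ) / (d + 1)) • (1 + swapMatrix (Fin d) ℂ) := by
  have htr : ∀ i, (outer (v i) (v i)).trace = 1 := fun i => by
    simp [trace_outer_self, h.norm_eq_one]
  have hd : (d : ℂ) + 1 ≠ 0 := by exact_mod_cast d.succ_ne_zero
  have hκ : (Fintype.card κ : ℂ) = d ^ 2 := by exact_mod_cast h.card_eq
  have hTT : ((1 + swapMatrix (Fin d) ℂ) * (1 + swapMatrix (Fin d) ℂ)).trace = 2 * (d ^ 2 + d) := by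
    rw [one_add_swapMatrix_mul_self, trace_smul, trace_add, trace_one, trace_swapMatrix]
    simp only [Fintype.card_prod, Fintype.card_fin, Nat.cast_mul, smul_add, nsmul_eq_mul,
      Nat.cast_ofNat]
    ring
  apply IsHermitian.eq_smul_of_trace_mul_eq
  case hS =>
    rw [IsHermitian, conjTranspose_sum]
    refine Finset.sum_congr rfl fun i _ => ?_
    rw [conjTranspose_kronecker, (isHermitian_outer_self _).eq]
  case hT => exact isHermitian_one.add isHermitian_swapMatrix
  case hc => simp [IsSelfAdjoint]
  case hST =>
    rw [hTT, mul_add, Matrix.mul_one, Finset.sum_mul, trace_add, trace_sum, trace_sum]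
    simp only [trace_kronecker, htr, mul_one, Finset.sum_const, Finset.card_univ, nsmul_eq_mul, hκ,
      trace_kronecker_mul_swapMatrix, h.trace_outer_mul_outer, if_pos]
    field_simp
    ring
  case hSS =>
    have hsq : ∀ i j, (outer (v i) (v i) * outer (v j) (v j)).trace ^ 2 =
        if i = j then 1 else ((d : ℂ) + 1)⁻¹ ^ 2 := fun i j => by
      rw [h.trace_outer_mul_outer]
      split_ifs <;> simp
    rw [hTT, Finset.sum_mul_sum, trace_sum]
    simp only [trace_sum, ← mul_kronecker_mul, trace_kronecker, ← sq, hsq,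
      Fintype.sum_ite_eq_sub_add, Finset.sum_const, Finset.card_univ, nsmul_eq_mul, hκ]
    field_simp
    ring

end IsSIC

theorem sic_gives_Z_channel {d : ℕ} (hd : 2 ≤ d)
    (v : Fin (d ^ 2) → EuclideanSpace ℂ (Fin d))
    (hv : ∀ i, ‖v i‖ = 1)
    (hang : ∀ i j, i ≠ j → ‖(inner ℂ (v i) (v j) : ℂ)‖ ^ 2 = 1 / (d + 1))
    (X : Matrix (Fin d) (Fin d) ℂ) :
    ((d : ℂ))⁻¹ • ∑ i, outer (v i) (v i) * X * outer (v i) (v i) =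
      ((d : ℂ) + 1)⁻¹ • (X + X.trace • (1 : Matrix (Fin d) (Fin d) ℂ)) := by
  have hsic : IsSIC v := ⟨Fintype.card_fin _, hv, hang⟩
  have hd0 : (d : ℂ) ≠ 0 := by exact_mod_cast (by omega : d ≠ 0)
  rw [sum_mul_mul_eq_of_sum_kronecker_eq _ _ _ hsic.sum_kronecker_outer, smul_smul]
  congr 1
  field_simp
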